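/- The graph D(10) (the Levi graph of the cyclic 10₃ configuration with base line {0,1,3}) has a 2-factor consisting of a 6-cycle and a 14-cycle, as well as a hamiltonian 2-factor; hence D(10) is not pseudo 2-factor isomorphic. -/
import Mathlib


open SimpleGraph

/-- A 2-factor of `G`: a spanning subgraph in which every vertex has degree exactly 2. -/
def SimpleGraph.IsTwoFactor {V : Type*} (G F : SimpleGraph V) : Prop :=
  F ≤ G ∧ ∀ v : V, (F.neighborSet v).ncard = 2

/-- The number of cycles of a 2-factor, i.e. its number of connected components. -/
noncomputable def SimpleGraph.numCycles {V : Type*} (F : SimpleGraph V) : ℕ :=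
  Nat.card F.ConnectedComponent

/-- A graph is pseudo 2-factor isomorphic if all its 2-factors have the same
parity of number of cycles. -/
def SimpleGraph.PseudoTwoFactorIsomorphic {V : Type*} (G : SimpleGraph V) : Prop :=
  ∀ F₁ F₂ : SimpleGraph V, G.IsTwoFactor F₁ → G.IsTwoFactor F₂ →
    F₁.numCycles % 2 = F₂.numCycles % 2

abbrev V10 := ZMod 10 ⊕ ZMod 10

/-- `D(10)`: the Levi graph of the cyclic `10₃` configuration with base line
`{0,1,3}`: points `ZMod 10` (left), lines `ZMod 10` (right), point `p` adjacent to
line `l` iff `p ∈ {l, l+1, l+3}`. -/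
def D10 : SimpleGraph (ZMod 10 ⊕ ZMod 10) :=
  SimpleGraph.fromRel fun a b =>
    match a, b with
    | Sum.inl p, Sum.inr l => p = l ∨ p = l + 1 ∨ p = l + 3
    | _, _ => False

instance : DecidableRel D10.Adj := fun a b => by
  unfold D10
  rw [SimpleGraph.fromRel_adj]
  cases a <;> cases b <;> dsimp only <;> infer_instance

def E1 : Finset (V10 × V10) := {((Sum.inl 0 : V10), (Sum.inr 0 : V10)), ((Sum.inr 0 : V10), (Sum.inl 1 : V10)), ((Sum.inl 1 : V10), (Sum.inr 1 : V10)), ((Sum.inr 1 : V10), (Sum.inl 2 : V10)), ((Sum.inl 2 : V10), (Sum.inr 9 : V10)), ((Sum.inr 9 : V10), (Sum.inl 0 : V10)), ((Sum.inl 3 : V10), (Sum.inr 2 : V10)), ((Sum.inr 2 : V10), (Sum.inl 5 : V10)), ((Sum.inl 5 : V10), (Sum.inr 5 : V10)), ((Sum.inr 5 : V10), (Sum.inl 6 : V10)), ((Sum.inl 6 : V10), (Sum.inr 6 : V10)), ((Sum.inr 6 : V10), (Sum.inl 9 : V10)), ((Sum.inl 9 : V10), (Sum.inr 8 : V10)),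 ((Sum.inr 8 : V10), (Sum.inl 8 : V10)), ((Sum.inl 8 : V10), (Sum.inr 7 : V10)), ((Sum.inr 7 : V10), (Sum.inl 7 : V10)), ((Sum.inl 7 : V10), (Sum.inr 4 : V10)), ((Sum.inr 4 : V10), (Sum.inl 4 : V10)), ((Sum.inl 4 : V10), (Sum.inr 3 : V10)), ((Sum.inr 3 : V10), (Sum.inl 3 : V10))}

def E2 : Finset (V10 × V10) := {((Sum.inl 0 : V10), (Sum.inr 0 : V10)), ((Sum.inr 0 : V10), (Sum.inl 1 : V10)), ((Sum.inl 1 : V10), (Sum.inr 1 : V10)), ((Sum.inr 1 : V10), (Sum.inl 2 : V10)), ((Sum.inl 2 : V10), (Sum.inr 2 : V10)), ((Sum.inr 2 : V10), (Sum.inl 3 : V10)), ((Sum.inl 3 : V10), (Sum.inr 3 : V10)), ((Sum.inr 3 : V10), (Sum.inl 4 : V10)), ((Sum.inl 4 : V10), (Sum.inr 4 : V10)), ((Sum.inr 4 : V10), (Sum.inl 5 : V10)), ((Sum.inl 5 : V10), (Sum.inr 5 : V10)), ((Sum.inr 5 : V10), (Sum.inl 6 : V10)), ((Sum.inl 6 :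 V10), (Sum.inr 6 : V10)), ((Sum.inr 6 : V10), (Sum.inl 7 : V10)), ((Sum.inl 7 : V10), (Sum.inr 7 : V10)), ((Sum.inr 7 : V10), (Sum.inl 8 : V10)), ((Sum.inl 8 : V10), (Sum.inr 8 : V10)), ((Sum.inr 8 : V10), (Sum.inl 9 : V10)), ((Sum.inl 9 : V10), (Sum.inr 9 : V10)), ((Sum.inr 9 : V10), (Sum.inl 0 : V10))}

def F1 : SimpleGraph V10 := SimpleGraph.fromRel fun a b => (a, b) ∈ E1
def F2 : SimpleGraph V10 := SimpleGraph.fromRel fun a b => (a, b) ∈ E2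

instance : DecidableRel F1.Adj := fun a b => by
  unfold F1
  exact decidable_of_iff _ (SimpleGraph.fromRel_adj _ a b).symm
instance : DecidableRel F2.Adj := fun a b => by
  unfold F2
  exact decidable_of_iff _ (SimpleGraph.fromRel_adj _ a b).symm

lemma ncard_nbr {V : Type*} [Fintype V] (F : SimpleGraph V) [DecidableRel F.Adj] (v : V) :
    (F.neighborSet v).ncard = F.degree v := by
  rw [Set.ncard_eq_toFinset_card']; rfl

lemma F1_two_factor : D10.IsTwoFactor F1 := by
  constructor
  · exact fun a b h => by revert h; revert a b; decide
  · intro v; rw [ncard_nbr]; revert v; decide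

lemma F2_two_factor : D10.IsTwoFactor F2 := by
  constructor
  · exact fun a b h => by revert h; revert a b; decide
  · intro v; rw [ncard_nbr]; revert v; decide

lemma r6_0 : F1.Reachable (Sum.inl 0 : V10) (Sum.inl 0 : V10) := SimpleGraph.Reachable.refl _
lemma r6_1 : F1.Reachable (Sum.inl 0 : V10) (Sum.inr 0 : V10) := r6_0.trans (SimpleGraph.Adj.reachable (by decide : F1.Adj (Sum.inl 0 : V10) (Sum.inr 0 : V10)))
lemma r6_2 : F1.Reachable (Sum.inl 0 : V10) (Sum.inl 1 : V10) := r6_1.trans (SimpleGraph.Adj.reachable (by decide : F1.Adj (Sum.inr 0 : V10) (Sum.inl 1 : V10)))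
lemma r6_3 : F1.Reachable (Sum.inl 0 : V10) (Sum.inr 1 : V10) := r6_2.trans (SimpleGraph.Adj.reachable (by decide : F1.Adj (Sum.inl 1 : V10) (Sum.inr 1 : V10)))
lemma r6_4 : F1.Reachable (Sum.inl 0 : V10) (Sum.inl 2 : V10) := r6_3.trans (SimpleGraph.Adj.reachable (by decide : F1.Adj (Sum.inr 1 : V10) (Sum.inl 2 : V10)))
lemma r6_5 : F1.Reachable (Sum.inl 0 : V10) (Sum.inr 9 : V10) := r6_4.trans (SimpleGraph.Adj.reachable (by decide : F1.Adj (Sum.inl 2 : V10) (Sum.inr 9 : V10)))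

lemma r14_0 : F1.Reachable (Sum.inl 3 : V10) (Sum.inl 3 : V10) := SimpleGraph.Reachable.refl _
lemma r14_1 : F1.Reachable (Sum.inl 3 : V10) (Sum.inr 2 : V10) := r14_0.trans (SimpleGraph.Adj.reachable (by decide : F1.Adj (Sum.inl 3 : V10) (Sum.inr 2 : V10)))
lemma r14_2 : F1.Reachable (Sum.inl 3 : V10) (Sum.inl 5 : V10) := r14_1.trans (SimpleGraph.Adj.reachable (by decide : F1.Adj (Sum.inr 2 : V10) (Sum.inl 5 : V10)))
lemma r14_3 : F1.Reachable (Sum.inl 3 : V10) (Sum.inr 5 : V10) := r14_2.trans (SimpleGraph.Adj.reachable (by decide : F1.Adj (Sum.inl 5 : V10) (Sum.inr 5 : V10)))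
lemma r14_4 : F1.Reachable (Sum.inl 3 : V10) (Sum.inl 6 : V10) := r14_3.trans (SimpleGraph.Adj.reachable (by decide : F1.Adj (Sum.inr 5 : V10) (Sum.inl 6 : V10)))
lemma r14_5 : F1.Reachable (Sum.inl 3 : V10) (Sum.inr 6 : V10) := r14_4.trans (SimpleGraph.Adj.reachable (by decide : F1.Adj (Sum.inl 6 : V10) (Sum.inr 6 : V10)))
lemma r14_6 : F1.Reachable (Sum.inl 3 : V10) (Sum.inl 9 : V10) := r14_5.trans (SimpleGraph.Adj.reachable (by decide : F1.Adj (Sum.inr 6 : V10) (Sum.inl 9 : V10)))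
lemma r14_7 : F1.Reachable (Sum.inl 3 : V10) (Sum.inr 8 : V10) := r14_6.trans (SimpleGraph.Adj.reachable (by decide : F1.Adj (Sum.inl 9 : V10) (Sum.inr 8 : V10)))
lemma r14_8 : F1.Reachable (Sum.inl 3 : V10) (Sum.inl 8 : V10) := r14_7.trans (SimpleGraph.Adj.reachable (by decide : F1.Adj (Sum.inr 8 : V10) (Sum.inl 8 : V10)))
lemma r14_9 : F1.Reachable (Sum.inl 3 : V10) (Sum.inr 7 : V10) := r14_8.trans (SimpleGraph.Adj.reachable (by decide : F1.Adj (Sum.inl 8 : V10) (Sum.inr 7 : V10)))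
lemma r14_10 : F1.Reachable (Sum.inl 3 : V10) (Sum.inl 7 : V10) := r14_9.trans (SimpleGraph.Adj.reachable (by decide : F1.Adj (Sum.inr 7 : V10) (Sum.inl 7 : V10)))
lemma r14_11 : F1.Reachable (Sum.inl 3 : V10) (Sum.inr 4 : V10) := r14_10.trans (SimpleGraph.Adj.reachable (by decide : F1.Adj (Sum.inl 7 : V10) (Sum.inr 4 : V10)))
lemma r14_12 : F1.Reachable (Sum.inl 3 : V10) (Sum.inl 4 : V10) := r14_11.trans (SimpleGraph.Adj.reachable (by decide : F1.Adj (Sum.inr 4 : V10) (Sum.inl 4 : V10)))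
lemma r14_13 : F1.Reachable (Sum.inl 3 : V10) (Sum.inr 3 : V10) := r14_12.trans (SimpleGraph.Adj.reachable (by decide : F1.Adj (Sum.inl 4 : V10) (Sum.inr 3 : V10)))

lemma rH_0 : F2.Reachable (Sum.inl 0 : V10) (Sum.inl 0 : V10) := SimpleGraph.Reachable.refl _
lemma rH_1 : F2.Reachable (Sum.inl 0 : V10) (Sum.inr 0 : V10) := rH_0.trans (SimpleGraph.Adj.reachable (by decide : F2.Adj (Sum.inl 0 : V10) (Sum.inr 0 : V10)))
lemma rH_2 : F2.Reachable (Sum.inl 0 : V10) (Sum.inl 1 : V10) := rH_1.trans (SimpleGraph.Adj.reachable (by decide : F2.Adj (Sum.inr 0 : V10) (Sum.inl 1 : V10)))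
lemma rH_3 : F2.Reachable (Sum.inl 0 : V10) (Sum.inr 1 : V10) := rH_2.trans (SimpleGraph.Adj.reachable (by decide : F2.Adj (Sum.inl 1 : V10) (Sum.inr 1 : V10)))
lemma rH_4 : F2.Reachable (Sum.inl 0 : V10) (Sum.inl 2 : V10) := rH_3.trans (SimpleGraph.Adj.reachable (by decide : F2.Adj (Sum.inr 1 : V10) (Sum.inl 2 : V10)))
lemma rH_5 : F2.Reachable (Sum.inl 0 : V10) (Sum.inr 2 : V10) := rH_4.trans (SimpleGraph.Adj.reachable (by decide : F2.Adj (Sum.inl 2 : V10) (Sum.inr 2 : V10)))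
lemma rH_6 : F2.Reachable (Sum.inl 0 : V10) (Sum.inl 3 : V10) := rH_5.trans (SimpleGraph.Adj.reachable (by decide : F2.Adj (Sum.inr 2 : V10) (Sum.inl 3 : V10)))
lemma rH_7 : F2.Reachable (Sum.inl 0 : V10) (Sum.inr 3 : V10) := rH_6.trans (SimpleGraph.Adj.reachable (by decide : F2.Adj (Sum.inl 3 : V10) (Sum.inr 3 : V10)))
lemma rH_8 : F2.Reachable (Sum.inl 0 : V10) (Sum.inl 4 : V10) := rH_7.trans (SimpleGraph.Adj.reachable (by decide : F2.Adj (Sum.inr 3 : V10) (Sum.inl 4 : V10)))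
lemma rH_9 : F2.Reachable (Sum.inl 0 : V10) (Sum.inr 4 : V10) := rH_8.trans (SimpleGraph.Adj.reachable (by decide : F2.Adj (Sum.inl 4 : V10) (Sum.inr 4 : V10)))
lemma rH_10 : F2.Reachable (Sum.inl 0 : V10) (Sum.inl 5 : V10) := rH_9.trans (SimpleGraph.Adj.reachable (by decide : F2.Adj (Sum.inr 4 : V10) (Sum.inl 5 : V10)))
lemma rH_11 : F2.Reachable (Sum.inl 0 : V10) (Sum.inr 5 : V10) := rH_10.trans (SimpleGraph.Adj.reachable (by decide : F2.Adj (Sum.inl 5 : V10) (Sum.inr 5 : V10)))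
lemma rH_12 : F2.Reachable (Sum.inl 0 : V10) (Sum.inl 6 : V10) := rH_11.trans (SimpleGraph.Adj.reachable (by decide : F2.Adj (Sum.inr 5 : V10) (Sum.inl 6 : V10)))
lemma rH_13 : F2.Reachable (Sum.inl 0 : V10) (Sum.inr 6 : V10) := rH_12.trans (SimpleGraph.Adj.reachable (by decide : F2.Adj (Sum.inl 6 : V10) (Sum.inr 6 : V10)))
lemma rH_14 : F2.Reachable (Sum.inl 0 : V10) (Sum.inl 7 : V10) := rH_13.trans (SimpleGraph.Adj.reachable (by decide : F2.Adj (Sum.inr 6 : V10) (Sum.inl 7 : V10)))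
lemma rH_15 : F2.Reachable (Sum.inl 0 : V10) (Sum.inr 7 : V10) := rH_14.trans (SimpleGraph.Adj.reachable (by decide : F2.Adj (Sum.inl 7 : V10) (Sum.inr 7 : V10)))
lemma rH_16 : F2.Reachable (Sum.inl 0 : V10) (Sum.inl 8 : V10) := rH_15.trans (SimpleGraph.Adj.reachable (by decide : F2.Adj (Sum.inr 7 : V10) (Sum.inl 8 : V10)))
lemma rH_17 : F2.Reachable (Sum.inl 0 : V10) (Sum.inr 8 : V10) := rH_16.trans (SimpleGraph.Adj.reachable (by decide : F2.Adj (Sum.inl 8 : V10) (Sum.inr 8 : V10)))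
lemma rH_18 : F2.Reachable (Sum.inl 0 : V10) (Sum.inl 9 : V10) := rH_17.trans (SimpleGraph.Adj.reachable (by decide : F2.Adj (Sum.inr 8 : V10) (Sum.inl 9 : V10)))
lemma rH_19 : F2.Reachable (Sum.inl 0 : V10) (Sum.inr 9 : V10) := rH_18.trans (SimpleGraph.Adj.reachable (by decide : F2.Adj (Sum.inl 9 : V10) (Sum.inr 9 : V10)))


def S6 : Finset V10 := {(Sum.inl 0 : V10), (Sum.inr 0 : V10), (Sum.inl 1 : V10), (Sum.inr 1 : V10), (Sum.inl 2 : V10), (Sum.inr 9 : V10)}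
def S14 : Finset V10 := {(Sum.inl 3 : V10), (Sum.inr 2 : V10), (Sum.inl 5 : V10), (Sum.inr 5 : V10), (Sum.inl 6 : V10), (Sum.inr 6 : V10), (Sum.inl 9 : V10), (Sum.inr 8 : V10), (Sum.inl 8 : V10), (Sum.inr 7 : V10), (Sum.inl 7 : V10), (Sum.inr 4 : V10), (Sum.inl 4 : V10), (Sum.inr 3 : V10)}

def f1 : V10 → Bool := fun v => decide (v ∈ S6)

lemma f1_adj : ∀ u v : V10, F1.Adj u v → f1 u = f1 v := by decide

lemma f1_walk : ∀ (u v : V10) (_ : F1.Walk u v), f1 u = f1 v := by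
  intro u v p
  induction p with
  | nil => rfl
  | cons h _ ih => exact (f1_adj _ _ h).trans ih

lemma reach_true : ∀ v : V10, f1 v = true → F1.Reachable (Sum.inl 0) v := by
  intro w hw
  have hw' : w ∈ S6 := of_decide_eq_true hw
  simp only [S6, Finset.mem_insert, Finset.mem_singleton] at hw'
  rcases hw' with rfl|rfl|rfl|rfl|rfl|rfl
  all_goals first | exact r6_0 | exact r6_1 | exact r6_2 | exact r6_3 | exact r6_4 | exact r6_5

lemma reach_false : ∀ v : V10, f1 v = false → F1.Reachable (Sum.inl 3) v := by
  intro w hw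
  have hw' : w ∈ S14 := by revert hw; revert w; decide
  simp only [S14, Finset.mem_insert, Finset.mem_singleton] at hw'
  rcases hw' with rfl|rfl|rfl|rfl|rfl|rfl|rfl|rfl|rfl|rfl|rfl|rfl|rfl|rfl
  all_goals first | exact r14_0 | exact r14_1 | exact r14_2 | exact r14_3 | exact r14_4 | exact r14_5 | exact r14_6 | exact r14_7 | exact r14_8 | exact r14_9 | exact r14_10 | exact r14_11 | exact r14_12 | exact r14_13

noncomputable def g1 : F1.ConnectedComponent → Bool :=
  SimpleGraph.ConnectedComponent.lift f1 (fun _ _ p _ => f1_walk _ _ p)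

lemma g1_bij : Function.Bijective g1 := by
  constructor
  · intro c d
    refine SimpleGraph.ConnectedComponent.ind₂ (fun u w h => ?_) c d
    have huw : f1 u = f1 w := h
    cases hu : f1 u with
    | true =>
      exact SimpleGraph.ConnectedComponent.sound
        (((reach_true u hu).symm.trans (reach_true w (huw ▸ hu))))
    | false =>
      exact SimpleGraph.ConnectedComponent.sound
        (((reach_false u hu).symm.trans (reach_false w (huw ▸ hu))))
  · intro b
    cases b with
    | true => exact ⟨F1.connectedComponentMk (Sum.inl 0), by decide⟩
    | false => exact ⟨F1.connectedComponentMk (Sum.inl 3), by decide⟩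

lemma F1_numCycles : F1.numCycles = 2 := by
  unfold SimpleGraph.numCycles
  rw [Nat.card_congr (Equiv.ofBijective g1 g1_bij)]
  rw [Nat.card_eq_fintype_card]
  rfl

lemma supp_eq_true : (F1.connectedComponentMk (Sum.inl 0)).supp = ↑S6 := by
  ext w
  constructor
  · intro h
    have : g1 (F1.connectedComponentMk w) = g1 (F1.connectedComponentMk (Sum.inl 0)) := by
      rw [show F1.connectedComponentMk w = F1.connectedComponentMk (Sum.inl 0) from h]
    have hf : f1 w = f1 (Sum.inl 0) := this
    have : f1 w = true := by rw [hf]; decide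
    exact Finset.mem_coe.mpr (of_decide_eq_true this)
  · intro h
    have hf : f1 w = true := decide_eq_true (Finset.mem_coe.mp h)
    exact (SimpleGraph.ConnectedComponent.sound (reach_true w hf)).symm

lemma f1_false_mem : ∀ v : V10, f1 v = false → v ∈ S14 := by decide
lemma f1_mem_false : ∀ v : V10, v ∈ S14 → f1 v = false := by decide

lemma supp_eq_false : (F1.connectedComponentMk (Sum.inl 3)).supp = ↑S14 := by
  ext w
  constructor
  · intro h
    have : g1 (F1.connectedComponentMk w) = g1 (F1.connectedComponentMk (Sum.inl 3)) := by
      rw [show F1.connectedComponentMk w = F1.connectedComponentMk (Sum.inl 3) from h]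
    have hf : f1 w = f1 (Sum.inl 3) := this
    have : f1 w = false := by rw [hf]; decide
    exact Finset.mem_coe.mpr (f1_false_mem w this)
  · intro h
    have hf : f1 w = false := f1_mem_false w (Finset.mem_coe.mp h)
    exact (SimpleGraph.ConnectedComponent.sound (reach_false w hf)).symm

def S20 : Finset V10 := {(Sum.inl 0 : V10), (Sum.inr 0 : V10), (Sum.inl 1 : V10), (Sum.inr 1 : V10), (Sum.inl 2 : V10), (Sum.inr 2 : V10), (Sum.inl 3 : V10), (Sum.inr 3 : V10), (Sum.inl 4 : V10), (Sum.inr 4 : V10), (Sum.inl 5 : V10), (Sum.inr 5 : V10), (Sum.inl 6 : V10), (Sum.inr 6 : V10), (Sum.inl 7 : V10), (Sum.inr 7 : V10), (Sum.inl 8 : V10), (Sum.inr 8 : V10), (Sum.inl 9 : V10), (Sum.inr 9 : V10)}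

lemma F2_connected : F2.Connected := by
  rw [SimpleGraph.connected_iff]
  refine ⟨fun u w => ?_, ⟨Sum.inl 0⟩⟩
  have key : ∀ v : V10, F2.Reachable (Sum.inl 0) v := by
    intro x
    have hx : x ∈ S20 := by revert x; decide
    simp only [S20, Finset.mem_insert, Finset.mem_singleton] at hx
    rcases hx with rfl|rfl|rfl|rfl|rfl|rfl|rfl|rfl|rfl|rfl|rfl|rfl|rfl|rfl|rfl|rfl|rfl|rfl|rfl|rfl
    all_goals first | exact rH_0 | exact rH_1 | exact rH_2 | exact rH_3 | exact rH_4 | exact rH_5 | exact rH_6 | exact rH_7 | exact rH_8 | exact rH_9 | exact rH_10 | exact rH_11 | exact rH_12 | exact rH_13 | exact rH_14 | exact rH_15 | exact rH_16 | exact rH_17 | exact rH_18 | exact rH_19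
  exact (key u).symm.trans (key w)

lemma F2_numCycles : F2.numCycles = 1 := by
  unfold SimpleGraph.numCycles
  have h := F2_connected
  have hsub : Subsingleton F2.ConnectedComponent := by
    constructor
    intro c d
    refine SimpleGraph.ConnectedComponent.ind₂ (fun u w => ?_) c d
    exact SimpleGraph.ConnectedComponent.sound (h.preconnected u w)
  have : Nonempty F2.ConnectedComponent := ⟨F2.connectedComponentMk (Sum.inl 0)⟩
  exact Nat.card_eq_one_iff_unique.mpr ⟨hsub, this⟩

/-- `D(10)` has a 2-factor consisting of a 6-cycle and a 14-cycle, as well as a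
hamiltonian 2-factor; hence it is not pseudo 2-factor isomorphic. -/
theorem D10_not_pseudo_two_factor_isomorphic :
    (∃ F : SimpleGraph (ZMod 10 ⊕ ZMod 10), D10.IsTwoFactor F ∧ F.numCycles = 2 ∧
      (∃ C : F.ConnectedComponent, C.supp.ncard = 6) ∧
      (∃ C : F.ConnectedComponent, C.supp.ncard = 14)) ∧
    (∃ F : SimpleGraph (ZMod 10 ⊕ ZMod 10), D10.IsTwoFactor F ∧ F.Connected) ∧
    ¬ D10.PseudoTwoFactorIsomorphic := by
  refine ⟨⟨F1, F1_two_factor, F1_numCycles, ?_, ?_⟩, ⟨F2, F2_two_factor, F2_connected⟩, ?_⟩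
  · exact ⟨F1.connectedComponentMk (Sum.inl 0), by rw [supp_eq_true, Set.ncard_coe_finset]; decide⟩
  · exact ⟨F1.connectedComponentMk (Sum.inl 3), by rw [supp_eq_false, Set.ncard_coe_finset]; decide⟩
  · intro h
    have := h F1 F2 F1_two_factor F2_two_factor
    rw [F1_numCycles, F2_numCycles] at this
    exact absurd this (by decide)
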